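/- For integers n, r, k with n ≥ r ≥ 1, ∑_{j=r}^{n} S_r(n,j) · c_j^{(k)}(1) = ∑_{j=r-1}^{n} S_r(n+1, j+1) · c_j^{(k)}, i.e., evaluating the poly-Cauchy polynomial at 1 under the r-Stirling transform agrees with the shifted r-Stirling transform of the poly-Cauchy numbers. -/

import Mathlib

open Finset

/-- Unsigned Stirling numbers of the first kind. -/
def stirling1 : ℕ → ℕ → ℕ
  | 0, 0 => 1
  | 0, _ + 1 => 0
  | _ + 1, 0 => 0
  | n + 1, k + 1 => n * stirling1 n (k + 1) + stirling1 n k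

/-- Stirling numbers of the second kind. -/
def stirling2 : ℕ → ℕ → ℕ
  | 0, 0 => 1
  | 0, _ + 1 => 0
  | _ + 1, 0 => 0
  | n + 1, k + 1 => (k + 1) * stirling2 n (k + 1) + stirling2 n k

/-- Unsigned r-Stirling numbers of the first kind. -/
def rStirling1 (r : ℕ) : ℕ → ℕ → ℕ
  | 0, m => if r = 0 ∧ m = 0 then 1 else 0
  | n + 1, m =>
    if n + 1 < r then 0
    else if n + 1 = r then (if m = r then 1 else 0)
    else n * rStirling1 r n m + (match m with | 0 => 0 | m' + 1 => rStirling1 r n m')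

/-- r-Stirling numbers of the second kind. -/
def rStirling2 (r : ℕ) : ℕ → ℕ → ℕ
  | 0, m => if r = 0 ∧ m = 0 then 1 else 0
  | n + 1, m =>
    if n + 1 < r then 0
    else if n + 1 = r then (if m = r then 1 else 0)
    else m * rStirling2 r n m + (match m with | 0 => 0 | m' + 1 => rStirling2 r n m')

/-- Poly-Cauchy numbers of the first kind `c_n^{(k)}`. -/
noncomputable def polyCauchy (k : ℤ) (n : ℕ) : ℝ :=
  ∑ ℓ ∈ range (n + 1), (-1 : ℝ) ^ (n - ℓ) * stirling1 n ℓ / ((ℓ : ℝ) + 1) ^ k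

/-- Poly-Cauchy numbers of the second kind `ĉ_n^{(k)}`. -/
noncomputable def polyCauchy2 (k : ℤ) (n : ℕ) : ℝ :=
  (-1 : ℝ) ^ n * ∑ ℓ ∈ range (n + 1), (stirling1 n ℓ : ℝ) / ((ℓ : ℝ) + 1) ^ k

/-- Poly-Cauchy polynomials of the first kind `c_n^{(k)}(z)`. -/
noncomputable def polyCauchyPoly (k : ℤ) (n : ℕ) (z : ℝ) : ℝ :=
  ∑ m ∈ range (n + 1), (stirling1 n m : ℝ) * (-1 : ℝ) ^ (n - m) *
    ∑ i ∈ range (m + 1), (m.choose i : ℝ) * z ^ (m - i) / ((i : ℝ) + 1) ^ k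

/-- Shifted poly-Cauchy numbers of the first kind `c_{n,α}^{(k)}`. -/
noncomputable def shiftedPolyCauchy (k : ℤ) (n : ℕ) (α : ℝ) : ℝ :=
  ∑ m ∈ range (n + 1), (stirling1 n m : ℝ) * (-1 : ℝ) ^ (n - m) / ((m : ℝ) + α) ^ k

/-- Shifted poly-Cauchy numbers of the second kind `ĉ_{n,α}^{(k)}`. -/
noncomputable def shiftedPolyCauchy2 (k : ℤ) (n : ℕ) (α : ℝ) : ℝ :=
  (-1 : ℝ) ^ n * ∑ m ∈ range (n + 1), (stirling1 n m : ℝ) / ((m : ℝ) + α) ^ k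

/-!
The signed Stirling numbers of the first kind are the coefficients of the falling factorial
`(x)_n = x (x - 1) ⋯ (x - n + 1)`. Hence, for the linear functional `L` on `ℝ[X]` with
`L xⁱ = 1 / (i + 1)ᵏ`, we have `c_n^{(k)} = L (x)_n` and `c_n^{(k)}(z) = L (x + z)_n`.
Since `(x + 1)_n = (x)_n + n (x)_{n-1}`, this gives `c_n^{(k)}(1) = c_n^{(k)} + n c_{n-1}^{(k)}`,
and the theorem follows from the recurrence `S_r(n+1, j+1) = (j+1) S_r(n, j+1) + S_r(n, j)`
after shifting the index of the first sum.
-/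

open Polynomial

theorem stirling1_eq_stirlingFirst : stirling1 = Nat.stirlingFirst := by
  funext n m
  induction n generalizing m with
  | zero => cases m <;> rfl
  | succ n ih =>
    cases m with
    | zero => rfl
    | succ m => rw [stirling1, Nat.stirlingFirst_succ_succ, ih, ih]

theorem descPochhammer_coeff {R : Type*} [Ring R] (n m : ℕ) :
    (descPochhammer R n).coeff m = (-1) ^ (n - m) * Nat.stirlingFirst n m := by
  induction n generalizing m with
  | zero => cases m <;> simp [coeff_one]
  | succ n ih =>
    rw [descPochhammer_succ_right, ← C_eq_natCast]
    cases m with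
    | zero =>
      cases n <;> simp [mul_sub, ih]
    | succ m =>
      rw [coeff_mul_X_sub_C, ih, ih, Nat.stirlingFirst_succ_succ]
      rcases le_or_gt (m + 1) n with h | h
      · rw [show n + 1 - (m + 1) = n - (m + 1) + 1 by omega, show n - m = n - (m + 1) + 1 by omega,
          pow_succ, Nat.cast_add, Nat.cast_mul, Nat.cast_comm n]
        noncomm_ring
      · rw [Nat.stirlingFirst_eq_zero_of_lt h, Nat.sub_eq_zero_of_le (by omega : n ≤ m),
          Nat.sub_eq_zero_of_le (by omega : n + 1 ≤ m + 1)]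
        simp

theorem descPochhammer_succ_comp_X_add_one {R : Type*} [CommRing R] (n : ℕ) :
    (descPochhammer R (n + 1)).comp (X + 1) =
      descPochhammer R (n + 1) + (n + 1) • descPochhammer R n := by
  nth_rw 1 [descPochhammer_succ_left]
  rw [mul_comp, X_comp, comp_assoc, sub_comp, X_comp, one_comp, add_sub_cancel_right, comp_X,
    descPochhammer_succ_right]
  simp only [nsmul_eq_mul]
  push_cast
  ring

noncomputable def polyCauchyFunctional (k : ℤ) : ℝ[X] →ₗ[ℝ] ℝ :=
  lsum fun i => (((i : ℝ) + 1) ^ k)⁻¹ • LinearMap.id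

theorem polyCauchyFunctional_apply (k : ℤ) {p : ℝ[X]} {N : ℕ} (hp : p.natDegree < N) :
    polyCauchyFunctional k p = ∑ i ∈ range N, p.coeff i / ((i : ℝ) + 1) ^ k := by
  rw [polyCauchyFunctional, lsum_apply, sum_over_range' _ (by simp) N hp]
  simp [div_eq_inv_mul]

theorem polyCauchy_eq_polyCauchyFunctional (k : ℤ) (n : ℕ) :
    polyCauchy k n = polyCauchyFunctional k (descPochhammer ℝ n) := by
  rw [polyCauchyFunctional_apply k (N := n + 1) (by simp), polyCauchy, stirling1_eq_stirlingFirst]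
  simp only [descPochhammer_coeff]

theorem polyCauchyPoly_eq_polyCauchyFunctional (k : ℤ) (n : ℕ) (z : ℝ) :
    polyCauchyPoly k n z = polyCauchyFunctional k ((descPochhammer ℝ n).comp (X + C z)) := by
  rw [(descPochhammer ℝ n).as_sum_range_C_mul_X_pow' (n := n + 1) (by simp),
    Polynomial.sum_comp, map_sum, polyCauchyPoly, stirling1_eq_stirlingFirst]
  refine sum_congr rfl fun m _ => ?_
  rw [C_mul_comp, X_pow_comp, ← smul_eq_C_mul, map_smul, smul_eq_mul, descPochhammer_coeff,
    polyCauchyFunctional_apply k (N := m + 1) (by simp)]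
  simp only [coeff_X_add_C_pow, mul_comm (z ^ _)]
  ring

theorem polyCauchyPoly_one (k : ℤ) (n : ℕ) :
    polyCauchyPoly k n 1 = polyCauchy k n + n * polyCauchy k (n - 1) := by
  rw [polyCauchyPoly_eq_polyCauchyFunctional, polyCauchy_eq_polyCauchyFunctional,
    polyCauchy_eq_polyCauchyFunctional, map_one]
  cases n with
  | zero => simp
  | succ n =>
    rw [descPochhammer_succ_comp_X_add_one, map_add, map_nsmul, nsmul_eq_mul, Nat.add_sub_cancel,
      Nat.cast_succ]

theorem rStirling2_succ_succ {r n : ℕ} (m : ℕ) (hn : r ≤ n) :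
    rStirling2 r (n + 1) (m + 1) = (m + 1) * rStirling2 r n (m + 1) + rStirling2 r n m := by
  rw [rStirling2, if_neg (by omega), if_neg (by omega)]

theorem rStirling2_eq_zero_of_lt_r {r m : ℕ} (n : ℕ) (hm : m < r) : rStirling2 r n m = 0 := by
  induction n generalizing m with
  | zero => simp [rStirling2]; omega
  | succ n ih =>
    cases m with
    | zero => simp only [rStirling2]; split_ifs <;> simp_all
    | succ m =>
      simp only [rStirling2, ih (m := m) (by omega), ih (m := m + 1) hm]
      split_ifs <;> omega

theorem rStirling2_eq_zero_of_lt {r n m : ℕ} (h : n < m) : rStirling2 r n m = 0 := by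
  induction n generalizing m with
  | zero => simp [rStirling2]; omega
  | succ n ih =>
    obtain ⟨m, rfl⟩ : ∃ m', m = m' + 1 := ⟨m - 1, by omega⟩
    simp only [rStirling2, ih (m := m) (by omega), ih (m := m + 1) (by omega)]
    split_ifs <;> omega

theorem sum_rStirling2_succ_mul {R : Type*} [CommSemiring R] {r n : ℕ} (hn : r ≤ n)
    (f : ℕ → R) :
    ∑ j ∈ Icc (r - 1) n, (rStirling2 r (n + 1) (j + 1) : R) * f j =
      ∑ j ∈ Icc r n, (rStirling2 r n j : R) * (f j + j * f (j - 1)) := by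
  have hL : ∑ j ∈ Icc (r - 1) n, (rStirling2 r (n + 1) (j + 1) : R) * f j =
      ∑ j ∈ range (n + 1), (rStirling2 r (n + 1) (j + 1) : R) * f j := by
    refine sum_subset (fun j hj => by simp at hj ⊢; omega) fun j hj hj' => ?_
    simp only [mem_Icc, mem_range, not_and_or, not_le] at hj hj'
    rw [rStirling2_eq_zero_of_lt_r _ (by omega), Nat.cast_zero, zero_mul]
  have hR : ∑ j ∈ Icc r n, (rStirling2 r n j : R) * (f j + j * f (j - 1)) =
      ∑ j ∈ range (n + 1), (rStirling2 r n j : R) * (f j + j * f (j - 1)) := by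
    refine sum_subset (fun j hj => by simp at hj ⊢; omega) fun j hj hj' => ?_
    simp only [mem_Icc, mem_range, not_and_or, not_le] at hj hj'
    rw [rStirling2_eq_zero_of_lt_r _ (by omega), Nat.cast_zero, zero_mul]
  have hshift : ∑ j ∈ range (n + 1), ((j : R) + 1) * rStirling2 r n (j + 1) * f j =
      ∑ j ∈ range (n + 1), (rStirling2 r n j : R) * (j * f (j - 1)) := by
    rw [sum_range_succ, rStirling2_eq_zero_of_lt (Nat.lt_succ_self n), sum_range_succ']
    simp only [Nat.cast_zero, add_tsub_cancel_right, Nat.cast_add, Nat.cast_one, mul_zero, zero_mul,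
      add_zero]
    exact sum_congr rfl fun j _ => by ring
  rw [hL, hR]
  calc ∑ j ∈ range (n + 1), (rStirling2 r (n + 1) (j + 1) : R) * f j
      = ∑ j ∈ range (n + 1), ((j : R) + 1) * rStirling2 r n (j + 1) * f j +
          ∑ j ∈ range (n + 1), (rStirling2 r n j : R) * f j := by
        rw [← sum_add_distrib]
        refine sum_congr rfl fun j _ => ?_
        rw [rStirling2_succ_succ _ hn]
        push_cast
        ring
    _ = ∑ j ∈ range (n + 1), (rStirling2 r n j : R) * (f j + j * f (j - 1)) := by
        rw [hshift, ← sum_add_distrib]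
        exact sum_congr rfl fun j _ => by ring

theorem stmt14_general (n r : ℕ) (k : ℤ) (hn : r ≤ n) :
    ∑ j ∈ Finset.Icc r n, (rStirling2 r n j : ℝ) * polyCauchyPoly k j 1 =
      ∑ j ∈ Finset.Icc (r - 1) n, (rStirling2 r (n + 1) (j + 1) : ℝ) * polyCauchy k j := by
  simp only [polyCauchyPoly_one]
  exact (sum_rStirling2_succ_mul hn _).symm

theorem stmt14 (n r : ℕ) (k : ℤ) (hr : 1 ≤ r) (hn : r ≤ n) :
    ∑ j ∈ Finset.Icc r n, (rStirling2 r n j : ℝ) * polyCauchyPoly k j 1 =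
      ∑ j ∈ Finset.Icc (r - 1) n, (rStirling2 r (n + 1) (j + 1) : ℝ) * polyCauchy k j :=
  stmt14_general n r k hn
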